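/- For every integer n ≥ 1 and every f : ℤ^d → ℝ, one has (L_n∘U_n∘L_n)(f) = (U_n∘L_n)(f). -/

import Mathlib

open Set

/-- A connection (connected class) on `ℤ^d`. -/
def IsConnection {d : ℕ} (C : Set (Set (Fin d → ℤ))) : Prop :=
  ∅ ∈ C ∧ (∀ x : Fin d → ℤ, {x} ∈ C) ∧
    ∀ S : Set (Set (Fin d → ℤ)), (∀ A ∈ S, A ∈ C) → (⋂₀ S).Nonempty → ⋃₀ S ∈ C

/-- A connection on `ℤ^d` satisfying the additional axioms (α), (β), (γ). -/
def GoodConnection {d : ℕ} (C : Set (Set (Fin d → ℤ))) : Prop :=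
  IsConnection C ∧
  Set.univ ∈ C ∧
  (∀ (a : Fin d → ℤ), ∀ V ∈ C, (fun x => a + x) '' V ∈ C) ∧
  (∀ V ∈ C, ∀ W ∈ C, V ⊂ W → ∃ x ∈ W \ V, insert x V ∈ C)

/-- `𝒩_n(x)`: the connected sets of cardinality `n+1` containing `x`. -/
def Nn {d : ℕ} (C : Set (Set (Fin d → ℤ))) (n : ℕ) (x : Fin d → ℤ) :
    Set (Set (Fin d → ℤ)) :=
  {V | V ∈ C ∧ x ∈ V ∧ V.encard = (n : ℕ∞) + 1}

/-- The operator `L_n`. -/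
noncomputable def Ln {d : ℕ} (C : Set (Set (Fin d → ℤ))) (n : ℕ)
    (f : (Fin d → ℤ) → ℝ) (x : Fin d → ℤ) : ℝ :=
  sSup ((fun V => sInf (f '' V)) '' Nn C n x)

/-- The operator `U_n`. -/
noncomputable def Un {d : ℕ} (C : Set (Set (Fin d → ℤ))) (n : ℕ)
    (f : (Fin d → ℤ) → ℝ) (x : Fin d → ℤ) : ℝ :=
  sInf ((fun V => sSup (f '' V)) '' Nn C n x)

/-- The set of points adjacent to `V`. -/
def adjSet {d : ℕ} (C : Set (Set (Fin d → ℤ))) (V : Set (Fin d → ℤ)) :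
    Set (Fin d → ℤ) :=
  {x | x ∉ V ∧ insert x V ∈ C}

/-- `V` is a local maximum set of `f`. -/
def IsLocalMaxSet {d : ℕ} (C : Set (Set (Fin d → ℤ))) (f : (Fin d → ℤ) → ℝ)
    (V : Set (Fin d → ℤ)) : Prop :=
  V ∈ C ∧ V.Finite ∧ V.Nonempty ∧ ∀ y ∈ adjSet C V, ∀ z ∈ V, f y < f z

/-- `V` is a local minimum set of `f`. -/
def IsLocalMinSet {d : ℕ} (C : Set (Set (Fin d → ℤ))) (f : (Fin d → ℤ) → ℝ)
    (V : Set (Fin d → ℤ)) : Prop :=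
  V ∈ C ∧ V.Finite ∧ V.Nonempty ∧ ∀ y ∈ adjSet C V, ∀ z ∈ V, f z < f y

section AuxLemmas

open Set

variable {d : ℕ} {C : Set (Set (Fin d → ℤ))}

lemma GoodConnection.union_mem (hC : GoodConnection C) {A B : Set (Fin d → ℤ)}
    (hA : A ∈ C) (hB : B ∈ C) (hne : (A ∩ B).Nonempty) : A ∪ B ∈ C := by
  have h := hC.1.2.2 {A, B} (by rintro X (rfl | rfl); exacts [hA, hB])
    (by rwa [Set.sInter_pair])
  rwa [Set.sUnion_pair] at h

lemma GoodConnection.grow (hC : GoodConnection C) :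
    ∀ (m : ℕ) (A D : Set (Fin d → ℤ)), A ∈ C → A.Finite → D ∈ C → A ⊆ D →
      A.encard + m ≤ D.encard →
      ∃ B ∈ C, A ⊆ B ∧ B ⊆ D ∧ B.encard = A.encard + m := by
  intro m
  induction m with
  | zero => intro A D hA _ _ hAD _; exact ⟨A, hA, subset_rfl, hAD, by simp⟩
  | succ m ih =>
    intro A D hA hAf hD hAD hcard
    have hne : A ≠ D := by
      rintro rfl
      have h1 : A.encard + 1 ≤ A.encard := le_trans
        (add_le_add le_rfl (by exact_mod_cast Nat.one_le_iff_ne_zero.mpr (Nat.succ_ne_zero m)))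
        hcard
      exact absurd ((ENat.add_one_le_iff hAf.encard_lt_top.ne).mp h1) (lt_irrefl _)
    obtain ⟨y, hy, hins⟩ := hC.2.2.2 A hA D hD
      (ssubset_iff_subset_ne.mpr ⟨hAD, hne⟩)
    have hcard' : (insert y A).encard = A.encard + 1 :=
      Set.encard_insert_of_notMem hy.2
    obtain ⟨B, hB, h1, h2, h3⟩ := ih (insert y A) D hins (hAf.insert y) hD
      (insert_subset hy.1 hAD)
      (by rw [hcard']; refine le_trans (le_of_eq ?_) hcard; push_cast; ring)
    exact ⟨B, hB, (subset_insert y A).trans h1, h2, by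
      rw [h3, hcard']; push_cast; ring⟩

lemma adj_nonempty (hd : 1 ≤ d) (hC : GoodConnection C) {A : Set (Fin d → ℤ)}
    (hA : A ∈ C) (hAf : A.Finite) : ∃ y, y ∈ adjSet C A := by
  have hne : Nonempty (Fin d) := ⟨⟨0, hd⟩⟩
  have hinf : (Set.univ : Set (Fin d → ℤ)).Infinite := Set.infinite_univ
  have hAne : A ≠ univ := fun h => hinf (h ▸ hAf)
  obtain ⟨y, hy, hins⟩ := hC.2.2.2 A hA univ hC.2.1
    (ssubset_iff_subset_ne.mpr ⟨subset_univ A, hAne⟩)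
  exact ⟨y, hy.2, hins⟩

lemma Nn_finite {n : ℕ} {x : Fin d → ℤ} {V : Set (Fin d → ℤ)}
    (hV : V ∈ Nn C n x) : V.Finite :=
  Set.finite_of_encard_eq_coe (k := n + 1) (by rw [hV.2.2]; push_cast; ring)

lemma exists_nn_subset (hC : GoodConnection C) {n : ℕ} {D : Set (Fin d → ℤ)}
    {z : Fin d → ℤ} (hD : D ∈ C) (hz : z ∈ D)
    (hcard : (n : ℕ∞) + 1 ≤ D.encard) : ∃ B ∈ Nn C n z, B ⊆ D := by
  obtain ⟨B, hB, h1, h2, h3⟩ := hC.grow n {z} D (hC.1.2.1 z) (finite_singleton z)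
    hD (singleton_subset_iff.mpr hz)
    (by rw [encard_singleton, add_comm]; exact hcard)
  exact ⟨B, ⟨hB, h1 rfl, by rw [h3, encard_singleton, add_comm]⟩, h2⟩

lemma nn_nonempty (hd : 1 ≤ d) (hC : GoodConnection C) (n : ℕ) (x : Fin d → ℤ) :
    (Nn C n x).Nonempty := by
  have hne : Nonempty (Fin d) := ⟨⟨0, hd⟩⟩
  have h : (univ : Set (Fin d → ℤ)).encard = ⊤ := Set.infinite_univ.encard_eq
  obtain ⟨B, hB, _⟩ := exists_nn_subset hC hC.2.1 (mem_univ x) (h ▸ le_top)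
  exact ⟨B, hB⟩

lemma le_Ln (f : (Fin d → ℤ) → ℝ) {n : ℕ} {x : Fin d → ℤ} {V : Set (Fin d → ℤ)}
    (hV : V ∈ Nn C n x) : sInf (f '' V) ≤ Ln C n f x := by
  refine le_csSup ⟨f x, ?_⟩ ⟨V, hV, rfl⟩
  rintro r ⟨W, hW, rfl⟩
  exact csInf_le ((Nn_finite hW).image f).bddBelow ⟨x, hW.2.1, rfl⟩

lemma Ln_le (hd : 1 ≤ d) (hC : GoodConnection C) (f : (Fin d → ℤ) → ℝ)
    (n : ℕ) (x : Fin d → ℤ) : Ln C n f x ≤ f x := by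
  refine csSup_le ((nn_nonempty hd hC n x).image _) ?_
  rintro r ⟨W, hW, rfl⟩
  exact csInf_le ((Nn_finite hW).image f).bddBelow ⟨x, hW.2.1, rfl⟩

lemma Un_le (f : (Fin d → ℤ) → ℝ) {n : ℕ} {x : Fin d → ℤ} {V : Set (Fin d → ℤ)}
    (hV : V ∈ Nn C n x) : Un C n f x ≤ sSup (f '' V) := by
  refine csInf_le ⟨f x, ?_⟩ ⟨V, hV, rfl⟩
  rintro r ⟨W, hW, rfl⟩
  exact le_csSup ((Nn_finite hW).image f).bddAbove ⟨x, hW.2.1, rfl⟩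

lemma le_Un (hd : 1 ≤ d) (hC : GoodConnection C) (f : (Fin d → ℤ) → ℝ)
    (n : ℕ) (x : Fin d → ℤ) : f x ≤ Un C n f x := by
  refine le_csInf ((nn_nonempty hd hC n x).image _) ?_
  rintro r ⟨W, hW, rfl⟩
  exact le_csSup ((Nn_finite hW).image f).bddAbove ⟨x, hW.2.1, rfl⟩

lemma ssubset_union_of_encard {n : ℕ} {V W : Set (Fin d → ℤ)}
    (hVn : V.encard ≤ (n : ℕ∞)) (hWcard : W.encard = (n : ℕ∞) + 1) :
    V ⊂ V ∪ W := by
  refine ssubset_iff_subset_ne.mpr ⟨Set.subset_union_left, fun h => ?_⟩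
  have hWV : W ⊆ V := by rw [h]; exact Set.subset_union_right
  have h2 : W.encard ≤ (n : ℕ∞) := le_trans (Set.encard_mono hWV) hVn
  rw [hWcard] at h2
  exact absurd ((ENat.add_one_le_iff (by simp)).mp h2) (lt_irrefl _)

/-- If `g` has no local max set of cardinality ≤ n, then around each point there is
a connected (n+1)-set on which `g` is at least `g x`. -/
lemma exists_nn_ge (hd : 1 ≤ d) (hC : GoodConnection C) {n : ℕ}
    {g : (Fin d → ℤ) → ℝ}
    (hg : ∀ V, IsLocalMaxSet C g V → V.encard ≤ (n : ℕ∞) → False)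
    (x : Fin d → ℤ) : ∃ V ∈ Nn C n x, ∀ y ∈ V, g x ≤ g y := by
  suffices aux : ∀ k : ℕ, k ≤ n →
      ∃ S ∈ C, x ∈ S ∧ S.encard = (k : ℕ∞) + 1 ∧ ∀ s ∈ S, g x ≤ g s by
    obtain ⟨S, h1, h2, h3, h4⟩ := aux n le_rfl
    exact ⟨S, ⟨h1, h2, h3⟩, h4⟩
  intro k
  induction k with
  | zero =>
    intro _
    exact ⟨{x}, hC.1.2.1 x, rfl, by simp, by rintro s rfl; exact le_rfl⟩
  | succ k ih =>
    intro hk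
    obtain ⟨S, hS, hxS, hcard, hge⟩ := ih (Nat.le_of_succ_le hk)
    have hSf : S.Finite :=
      Set.finite_of_encard_eq_coe (k := k + 1) (by rw [hcard]; push_cast; ring)
    have hnotmax : ¬ IsLocalMaxSet C g S := fun h =>
      hg S h (by rw [hcard]; exact_mod_cast hk)
    have hstep : ∃ y ∈ adjSet C S, ∃ z ∈ S, ¬ g y < g z := by
      by_contra hcon
      push_neg at hcon
      exact hnotmax ⟨hS, hSf, ⟨x, hxS⟩, hcon⟩
    obtain ⟨y, hy, z, hz, hyz⟩ := hstep
    refine ⟨insert y S, hy.2, mem_insert_of_mem y hxS, ?_, ?_⟩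
    · rw [Set.encard_insert_of_notMem hy.1, hcard]; push_cast; ring
    · rintro s (rfl | hs)
      · exact le_trans (hge z hz) (not_lt.mp hyz)
      · exact hge s hs

/-- `L_n f` has no local max set of cardinality ≤ n. -/
lemma no_local_max_Ln (hd : 1 ≤ d) (hC : GoodConnection C)
    (hadj : ∀ V ∈ C, V.Finite → (adjSet C V).Finite) {n : ℕ}
    (f : (Fin d → ℤ) → ℝ) :
    ∀ V, IsLocalMaxSet C (Ln C n f) V → V.encard ≤ (n : ℕ∞) → False := by
  intro V hV hVn
  obtain ⟨hVC, hVf, ⟨z, hz⟩, hmax⟩ := hV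
  obtain ⟨y₀, hy₀, hy₀max⟩ := Set.exists_max_image (adjSet C V) (Ln C n f)
    (hadj V hVC hVf) (adj_nonempty hd hC hVC hVf)
  have key : Ln C n f z ≤ Ln C n f y₀ := by
    refine csSup_le ((nn_nonempty hd hC n z).image _) ?_
    rintro r ⟨W, hW, rfl⟩
    have hUW : V ∪ W ∈ C := hC.union_mem hVC hW.1 ⟨z, hz, hW.2.1⟩
    obtain ⟨y, hyd, hins⟩ := hC.2.2.2 V hVC (V ∪ W) hUW
      (ssubset_union_of_encard hVn hW.2.2)
    have hyW : y ∈ W := hyd.1.resolve_left hyd.2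
    calc sInf (f '' W) ≤ Ln C n f y := le_Ln f ⟨hW.1, hyW, hW.2.2⟩
      _ ≤ Ln C n f y₀ := hy₀max y ⟨hyd.2, hins⟩
  exact absurd (lt_of_le_of_lt key (hmax y₀ hy₀ z hz)) (lt_irrefl _)

/-- `U_n` preserves having no local max set of cardinality ≤ n. -/
lemma no_local_max_Un (hd : 1 ≤ d) (hC : GoodConnection C) {n : ℕ}
    {g : (Fin d → ℤ) → ℝ}
    (hg : ∀ V, IsLocalMaxSet C g V → V.encard ≤ (n : ℕ∞) → False) :
    ∀ V, IsLocalMaxSet C (Un C n g) V → V.encard ≤ (n : ℕ∞) → False := by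
  intro V hV hVn
  obtain ⟨hVC, hVf, hVne, hmax⟩ := hV
  obtain ⟨z, hz, hzmin⟩ := Set.exists_min_image V (Un C n g) hVf hVne
  by_cases hcase : ∃ p ∈ V, Un C n g z ≤ g p
  · obtain ⟨p, hp, hgp⟩ := hcase
    obtain ⟨T, hT, hTge⟩ := exists_nn_ge hd hC hg p
    have hUT : V ∪ T ∈ C := hC.union_mem hVC hT.1 ⟨p, hp, hT.2.1⟩
    obtain ⟨y, hyd, hins⟩ := hC.2.2.2 V hVC (V ∪ T) hUT
      (ssubset_union_of_encard hVn hT.2.2)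
    have hyT : y ∈ T := hyd.1.resolve_left hyd.2
    have hzy : Un C n g z ≤ Un C n g y :=
      le_trans (le_trans hgp (hTge y hyT)) (le_Un hd hC g n y)
    exact absurd (lt_of_le_of_lt hzy (hmax y ⟨hyd.2, hins⟩ z hz)) (lt_irrefl _)
  · push_neg at hcase
    obtain ⟨y₀, hy₀⟩ := adj_nonempty hd hC hVC hVf
    have hy₀lt : Un C n g y₀ < Un C n g z := hmax y₀ hy₀ z hz
    have hW : ∃ W ∈ Nn C n y₀, sSup (g '' W) < Un C n g z := by
      by_contra hcon
      push_neg at hcon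
      have hle : Un C n g z ≤ Un C n g y₀ := by
        refine le_csInf ((nn_nonempty hd hC n y₀).image _) ?_
        rintro r ⟨W, hW, rfl⟩
        exact hcon W hW
      exact absurd (lt_of_le_of_lt hle hy₀lt) (lt_irrefl _)
    obtain ⟨W, hW, hWlt⟩ := hW
    have hWf := Nn_finite hW
    have hA : insert y₀ V ∪ W ∈ C :=
      hC.union_mem hy₀.2 hW.1 ⟨y₀, mem_insert y₀ V, hW.2.1⟩
    have hzA : z ∈ insert y₀ V ∪ W := Or.inl (mem_insert_of_mem y₀ hz)
    have hAcard : (n : ℕ∞) + 1 ≤ (insert y₀ V ∪ W).encard := by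
      rw [← hW.2.2]; exact encard_mono Set.subset_union_right
    obtain ⟨B, hB, hBA⟩ := exists_nn_subset hC hA hzA hAcard
    have hBf := Nn_finite hB
    have hBlt : ∀ b ∈ B, g b < Un C n g z := by
      intro b hb
      rcases hBA hb with hb' | hb'
      · rcases hb' with rfl | hb''
        · exact lt_of_le_of_lt
            (le_csSup (hWf.image g).bddAbove ⟨b, hW.2.1, rfl⟩) hWlt
        · exact hcase b hb''
      · exact lt_of_le_of_lt
          (le_csSup (hWf.image g).bddAbove ⟨b, hb', rfl⟩) hWlt
    have h1 : Un C n g z ≤ sSup (g '' B) := Un_le g hB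
    have h2 : sSup (g '' B) < Un C n g z := by
      obtain ⟨b, hb, heq⟩ :=
        Set.Nonempty.csSup_mem (Set.Nonempty.image g ⟨z, hB.2.1⟩) (hBf.image g)
      rw [← heq]
      exact hBlt b hb
    exact absurd (lt_of_le_of_lt h1 h2) (lt_irrefl _)

end AuxLemmas

/-- `L_n ∘ U_n ∘ L_n = U_n ∘ L_n`. -/
theorem LnUnLn_eq_UnLn {d : ℕ} (hd : 1 ≤ d)
    (C : Set (Set (Fin d → ℤ))) (hC : GoodConnection C)
    (hadj : ∀ V ∈ C, V.Finite → (adjSet C V).Finite)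
    (n : ℕ) (hn : 1 ≤ n) (f : (Fin d → ℤ) → ℝ) :
    Ln C n (Un C n (Ln C n f)) = Un C n (Ln C n f) := by
  have hg := no_local_max_Ln hd hC hadj (n := n) f
  have hh := no_local_max_Un hd hC (n := n) hg
  funext x
  apply le_antisymm
  · exact Ln_le hd hC _ n x
  · obtain ⟨V, hV, hge⟩ := exists_nn_ge hd hC hh x
    refine le_trans (le_csInf (Set.Nonempty.image _ ⟨x, hV.2.1⟩) ?_) (le_Ln _ hV)
    rintro r ⟨y, hy, rfl⟩
    exact hge y hy
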